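/- arXiv:1412.3673 — 3 statements merged into one kernel-verified Lean document; each statement's English description precedes it below -/
import Mathlib

section
/- Let F be a field of characteristic ≠ 2 and let W be the Weierstrass curve over F given by y² = x³ + p·x² + q·x + r with nonzero discriminant, and assume q² = 4·p·r. Let y₀ ∈ F satisfy y₀ ≠ 0 and y₀² = r, and let P be the point (0, y₀) of W. Then P is a point of exact order 3: P ≠ 0 and 3·P = 0 in the group of points of W. -/
/-!
The tangent to `y² = x³ + p x² + q x + r` at `(0, y₀)` is `y = y₀ + ℓ x` with `ℓ = q / (2 y₀)`.
Substituting it gives `x³ + (p - ℓ²) x² = 0`, since `(y₀ + ℓ x)² = r + q x + ℓ² x²`; and `ℓ² = p`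
is exactly `q² = 4 p r`. So the tangent meets the curve only at `(0, y₀)`: the point is a flex,
that is `2 P = -P`, hence `3 P = 0`.
-/

namespace WeierstrassCurve.Affine

variable {F : Type*} [Field F] {W : WeierstrassCurve.Affine F}

lemma ne_negY_of_two_mul_ne_zero (ha₁ : W.a₁ = 0) (ha₃ : W.a₃ = 0) {x y : F} (hy : 2 * y ≠ 0) :
    y ≠ W.negY x y := by
  rw [negY, ha₁, ha₃]
  contrapose! hy
  linear_combination hy

variable [DecidableEq F]

lemma slope_self_zero_of_a₁_a₃_eq_zero (ha₁ : W.a₁ = 0) (ha₃ : W.a₃ = 0) {y : F}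
    (hy : 2 * y ≠ 0) : W.slope 0 0 y y = W.a₄ / (2 * y) := by
  rw [slope_of_Y_ne rfl (ne_negY_of_two_mul_ne_zero ha₁ ha₃ hy), negY, ha₁, ha₃]
  ring_nf

lemma addX_slope_zero_eq_zero (ha₁ : W.a₁ = 0) (ha₃ : W.a₃ = 0) {y : F} (hy : 2 * y ≠ 0)
    (ha₄ : W.a₄ ^ 2 = 4 * W.a₂ * W.a₆) (hr : y ^ 2 = W.a₆) :
    W.addX 0 0 (W.slope 0 0 y y) = 0 := by
  have hℓ : (W.a₄ / (2 * y)) ^ 2 = W.a₂ := by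
    rw [div_pow, div_eq_iff (pow_ne_zero 2 hy)]
    linear_combination ha₄ - 4 * W.a₂ * hr
  rw [slope_self_zero_of_a₁_a₃_eq_zero ha₁ ha₃ hy, addX, hℓ, ha₁]
  ring

namespace Point

lemma three_nsmul_some_eq_zero_of_addX_slope_eq {x y : F} {h : W.Nonsingular x y}
    (hy : y ≠ W.negY x y) (hx : W.addX x x (W.slope x x y y) = x) : 3 • some _ _ h = 0 := by
  rw [show 3 = 2 + 1 from rfl, add_nsmul, two_nsmul, one_nsmul, add_self_of_Y_ne hy]
  refine add_of_Y_eq hx ?_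
  rw [addY, negAddY, hx, sub_self, mul_zero, zero_add]

end Point

end WeierstrassCurve.Affine

open Classical in
theorem three_torsion_point_general (F : Type*) [Field F] (hF : ringChar F ≠ 2) (p q r : F)
    (W : WeierstrassCurve.Affine F)
    (hW : W = { a₁ := 0, a₂ := p, a₃ := 0, a₄ := q, a₆ := r })
    (hpqr : q ^ 2 = 4 * p * r)
    (y₀ : F) (hy₀ : y₀ ≠ 0) (hr : y₀ ^ 2 = r)
    (h : W.Nonsingular 0 y₀) :
    WeierstrassCurve.Affine.Point.some _ _ h ≠ 0 ∧
      (3 : ℕ) • WeierstrassCurve.Affine.Point.some _ _ h = 0 := by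
  subst hW
  have h2y : 2 * y₀ ≠ 0 := mul_ne_zero (Ring.two_ne_zero hF) hy₀
  open WeierstrassCurve.Affine in
  exact ⟨Point.some_ne_zero h, Point.three_nsmul_some_eq_zero_of_addX_slope_eq
    (ne_negY_of_two_mul_ne_zero rfl rfl h2y) (addX_slope_zero_eq_zero rfl rfl h2y hpqr hr)⟩

open Classical in
/-- **If `q² = 4pr` then `(0, y₀)` is a point of exact order 3 on
`y² = x³ + p·x² + q·x + r`.** (Kollár–Mella, Proposition 13, exceptional cases) -/
theorem three_torsion_point (F : Type*) [Field F] (hF : ringChar F ≠ 2) (p q r : F)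
    (W : WeierstrassCurve.Affine F)
    (hW : W = { a₁ := 0, a₂ := p, a₃ := 0, a₄ := q, a₆ := r })
    (hΔ : W.Δ ≠ 0) (hpqr : q ^ 2 = 4 * p * r)
    (y₀ : F) (hy₀ : y₀ ≠ 0) (hr : y₀ ^ 2 = r)
    (h : W.Nonsingular 0 y₀) :
    WeierstrassCurve.Affine.Point.some _ _ h ≠ 0 ∧
      (3 : ℕ) • WeierstrassCurve.Affine.Point.some _ _ h = 0 :=
  three_torsion_point_general F hF p q r W hW hpqr y₀ hy₀ hr h
end

section
/- Let k be a field of characteristic ≠ 2 and let a₀, a₁, a₂, a₃ ∈ k[u] be polynomials with deg aᵢ ≤ 2 for all i and deg a₃ = 2. Then: (1) the polynomial n := (4a₂ − a₃²)² − 64a₀ has degree exactly 8 and the polynomial d := 64a₁ − 8a₃(4a₂ − a₃²) has degree exactly 6; (2) in the rational function field k(u) = RatFunc k, the element X := n/d is nonconstant (it does not lie in the image of k), and setting Z := X² + (1/2)·a₃·X + (1/8)·(4a₂ − a₃²) (with a₀, a₁, a₂, a₃ regarded as elements of k(u)), one has Z² = X⁴ + a₃·X³ + a₂·X² + a₁·X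 + a₀. -/
open Polynomial

theorem auxEq {F : Type*} [Field F] (A₀ A₁ A₂ A₃ x i2 i8 : F)
    (h64 : (64:F) ≠ 0) (h2 : i2 * 2 = 1) (h8 : i8 * 8 = 1)
    (hx : x * (64 * A₁ - 8 * A₃ * (4 * A₂ - A₃ ^ 2)) = (4 * A₂ - A₃ ^ 2) ^ 2 - 64 * A₀) :
    (x ^ 2 + i2 * A₃ * x + i8 * (4 * A₂ - A₃ ^ 2)) ^ 2
      = x ^ 4 + A₃ * x ^ 3 + A₂ * x ^ 2 + A₁ * x + A₀ := by
  apply mul_left_cancel₀ h64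
  linear_combination
    ((8 * (x ^ 2 + i2 * A₃ * x + i8 * (4 * A₂ - A₃ ^ 2)) +
        (8 * x ^ 2 + 4 * A₃ * x + (4 * A₂ - A₃ ^ 2))) * (4 * A₃ * x)) * h2 +
    ((8 * (x ^ 2 + i2 * A₃ * x + i8 * (4 * A₂ - A₃ ^ 2)) +
        (8 * x ^ 2 + 4 * A₃ * x + (4 * A₂ - A₃ ^ 2))) * (4 * A₂ - A₃ ^ 2)) * h8 - hx

/-- **The degree 8 rational multi-section of a Type G degree 1 conic bundle.**
(Kollár–Mella, Paragraph 18) -/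
theorem typeG_multisection (k : Type*) [Field k] (hk : ringChar k ≠ 2)
    (a₀ a₁ a₂ a₃ : k[X])
    (hd₀ : a₀.degree ≤ 2) (hd₁ : a₁.degree ≤ 2) (hd₂ : a₂.degree ≤ 2) (hd₃ : a₃.degree = 2) :
    ((4 * a₂ - a₃ ^ 2) ^ 2 - 64 * a₀).degree = 8 ∧
    (64 * a₁ - 8 * a₃ * (4 * a₂ - a₃ ^ 2)).degree = 6 ∧
    (letI φ : k[X] →+* RatFunc k := (algebraMap k[X] (RatFunc k) : k[X] →+* RatFunc k)
     letI X' : RatFunc k := φ ((4 * a₂ - a₃ ^ 2) ^ 2 - 64 * a₀) /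
       φ (64 * a₁ - 8 * a₃ * (4 * a₂ - a₃ ^ 2))
     letI Z' : RatFunc k :=
       X' ^ 2 + (1 / 2 : RatFunc k) * φ a₃ * X' + (1 / 8 : RatFunc k) * φ (4 * a₂ - a₃ ^ 2)
     X' ∉ Set.range (algebraMap k (RatFunc k)) ∧
       Z' ^ 2 = X' ^ 4 + φ a₃ * X' ^ 3 + φ a₂ * X' ^ 2 + φ a₁ * X' + φ a₀) := by
  have h2 : (2:k) ≠ 0 := Ring.two_ne_zero hk
  have h4k : (4:k) ≠ 0 := by
    have h : (4:k) = 2 * 2 := by norm_num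
    rw [h]; exact mul_ne_zero h2 h2
  have h8k : (8:k) ≠ 0 := by
    have h : (8:k) = 2 * 4 := by norm_num
    rw [h]; exact mul_ne_zero h2 h4k
  -- degrees of constants
  have hC4 : ((4:k[X])).degree ≤ 0 := by
    have h : (4:k[X]) = C (4:k) := by simp [map_ofNat]
    rw [h]; exact degree_C_le
  have hC8 : ((8:k[X])).degree = 0 := by
    have h : (8:k[X]) = C (8:k) := by simp [map_ofNat]
    rw [h]; exact degree_C h8k
  have hC64 : ((64:k[X])).degree ≤ 0 := by
    have h : (64:k[X]) = C (64:k) := by simp [map_ofNat]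
    rw [h]; exact degree_C_le
  have ha3sq : (a₃ ^ 2).degree = 4 := by
    rw [degree_pow, hd₃]; rfl
  have hlt1 : (4 * a₂).degree < (a₃ ^ 2).degree := by
    rw [ha3sq]
    exact lt_of_le_of_lt ((degree_mul_le _ _).trans (add_le_add hC4 hd₂))
      (by decide : (0 + 2 : WithBot ℕ) < 4)
  have hm : (4 * a₂ - a₃ ^ 2).degree = 4 := by
    rw [degree_sub_eq_right_of_degree_lt hlt1, ha3sq]
  have hmsq : ((4 * a₂ - a₃ ^ 2) ^ 2).degree = 8 := by rw [degree_pow, hm]; rfl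
  have hlt2 : (64 * a₀).degree < ((4 * a₂ - a₃ ^ 2) ^ 2).degree := by
    rw [hmsq]
    exact lt_of_le_of_lt ((degree_mul_le _ _).trans (add_le_add hC64 hd₀))
      (by decide : (0 + 2 : WithBot ℕ) < 8)
  have hn : ((4 * a₂ - a₃ ^ 2) ^ 2 - 64 * a₀).degree = 8 := by
    rw [degree_sub_eq_left_of_degree_lt hlt2, hmsq]
  have hrhs : (8 * a₃ * (4 * a₂ - a₃ ^ 2)).degree = 6 := by
    rw [degree_mul, degree_mul, hC8, hd₃, hm]; rfl
  have hlt3 : (64 * a₁).degree < (8 * a₃ * (4 * a₂ - a₃ ^ 2)).degree := by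
    rw [hrhs]
    exact lt_of_le_of_lt ((degree_mul_le _ _).trans (add_le_add hC64 hd₁))
      (by decide : (0 + 2 : WithBot ℕ) < 6)
  have hd : (64 * a₁ - 8 * a₃ * (4 * a₂ - a₃ ^ 2)).degree = 6 := by
    rw [degree_sub_eq_right_of_degree_lt hlt3, hrhs]
  set φ := (algebraMap k[X] (RatFunc k) : k[X] →+* RatFunc k) with hφ
  set n := (4 * a₂ - a₃ ^ 2) ^ 2 - 64 * a₀ with hn'
  set d := 64 * a₁ - 8 * a₃ * (4 * a₂ - a₃ ^ 2) with hd'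
  have hdne : d ≠ 0 := fun h => by simp [h] at hd
  have hφd : φ d ≠ 0 := RatFunc.algebraMap_ne_zero hdne
  have h2R : (2 : RatFunc k) ≠ 0 := by
    rw [show (2 : RatFunc k) = algebraMap k (RatFunc k) 2 from (map_ofNat _ 2).symm]
    exact (map_ne_zero_iff _ (algebraMap k (RatFunc k)).injective).mpr h2
  have h8R : (8 : RatFunc k) ≠ 0 := by
    rw [show (8 : RatFunc k) = algebraMap k (RatFunc k) 8 from (map_ofNat _ 8).symm]
    exact (map_ne_zero_iff _ (algebraMap k (RatFunc k)).injective).mpr h8k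
  have h64R : (64 : RatFunc k) ≠ 0 := by
    have h : (64 : RatFunc k) = 8 * 8 := by norm_num
    rw [h]; exact mul_ne_zero h8R h8R
  refine ⟨hn, hd, ?_, ?_⟩
  · -- nonconstancy
    rintro ⟨c, hc⟩
    rw [eq_div_iff hφd] at hc
    have hcd : algebraMap k (RatFunc k) c = φ (C c) := by
      rw [hφ, IsScalarTower.algebraMap_apply k k[X] (RatFunc k), Polynomial.algebraMap_eq]
    rw [hcd, ← map_mul] at hc
    have hcd2 : C c * d = n := RatFunc.algebraMap_injective k hc
    have hle : (C c * d).degree ≤ 6 := by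
      refine (degree_mul_le _ _).trans ?_
      refine (add_le_add degree_C_le (le_of_eq hd)).trans ?_
      exact le_of_eq (by decide)
    rw [hcd2, hn] at hle
    exact absurd hle (by decide)
  · -- the equation
    have hN' : φ n = (4 * φ a₂ - φ a₃ ^ 2) ^ 2 - 64 * φ a₀ := by
      rw [hn']; simp only [map_sub, map_mul, map_pow, map_ofNat]
    have hD' : φ d = 64 * φ a₁ - 8 * φ a₃ * (4 * φ a₂ - φ a₃ ^ 2) := by
      rw [hd']; simp only [map_sub, map_mul, map_pow, map_ofNat]
    have hM : φ (4 * a₂ - a₃ ^ 2) = 4 * φ a₂ - φ a₃ ^ 2 := by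
      simp only [map_sub, map_mul, map_pow, map_ofNat]
    have hx : φ n / φ d * (64 * φ a₁ - 8 * φ a₃ * (4 * φ a₂ - φ a₃ ^ 2))
        = (4 * φ a₂ - φ a₃ ^ 2) ^ 2 - 64 * φ a₀ := by
      rw [← hN', ← hD']; exact div_mul_cancel₀ _ hφd
    have hc2 : (1 / 2 : RatFunc k) * 2 = 1 := by
      rw [one_div, inv_mul_cancel₀ h2R]
    have hc8 : (1 / 8 : RatFunc k) * 8 = 1 := by
      rw [one_div, inv_mul_cancel₀ h8R]
    rw [hM]
    exact auxEq (φ a₀) (φ a₁) (φ a₂) (φ a₃) (φ n / φ d) (1/2) (1/8) h64R hc2 hc8 hx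
end

section
/- Let k be a field with algebraic closure k̄, and let a₀, a₁ ∈ k[U, V] be homogeneous polynomials of degree 2 with a₀ ≠ 0. Assume that a₀ divides a₁² in k[U, V], and that there is no homogeneous linear form ℓ ∈ k̄[U, V] such that ℓ² divides the image of a₀ and ℓ divides the image of a₁ in k̄[U, V]. Then there exists β ∈ k with a₁ = β·a₀. -/
/-!
Over `k̄` the form `a₀` splits as `ℓ₁ ℓ₂` into linear forms, which are prime. Both divide `a₁`
because `a₀ ∣ a₁ ^ 2`, and they are not associated, since otherwise `ℓ₂ ^ 2 ∣ a₀` and `ℓ₂ ∣ a₁`.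
Hence `a₀ ∣ a₁`, and as both are quadratic the quotient is a constant `γ ∈ k̄`. Comparing a
nonzero coefficient of `a₀` with the same coefficient of `a₁` shows that `γ` lies in `k`.
-/

open MvPolynomial

namespace MvPolynomial

variable {K : Type*} [Field K]

theorem IsHomogeneous.natDegree_aeval_X_one_le {R : Type*} [CommSemiring R]
    {f : MvPolynomial (Fin 2) R} {n : ℕ} (hf : f.IsHomogeneous n) :
    (MvPolynomial.aeval ![(Polynomial.X : Polynomial R), 1] f).natDegree ≤ n := by
  rw [f.as_sum, map_sum]
  refine Polynomial.natDegree_sum_le_of_forall_le _ _ fun m hm => ?_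
  have hmn : m 0 + m 1 = n := by
    simpa [Finsupp.weight_apply, Finsupp.sum_fintype, Fin.sum_univ_two]
      using hf (mem_support_iff.mp hm)
  simp only [aeval_monomial, Finsupp.prod_fintype _ _ (fun _ => pow_zero _), Fin.prod_univ_two,
    Matrix.cons_val_zero, Matrix.cons_val_one, one_pow, mul_one, ← Polynomial.C_eq_algebraMap]
  exact (Polynomial.natDegree_C_mul_X_pow_le _ _).trans (by omega)

theorem IsHomogeneous.exists_linear_factor [IsAlgClosed K] {f : MvPolynomial (Fin 2) K} {n : ℕ}
    (hf : f.IsHomogeneous (n + 1)) :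
    ∃ l g : MvPolynomial (Fin 2) K, l.IsHomogeneous 1 ∧ g.IsHomogeneous n ∧ f = l * g := by
  -- `f` is the homogenization of `p = f(X, 1)`: a root of `p` gives a linear factor of `f`,
  -- and if `deg p ≤ n` then `X 1` divides `f`.
  set p := MvPolynomial.aeval ![(Polynomial.X : Polynomial K), 1] f
  have hpf : p.homogenize (n + 1) = f := Polynomial.homogenize_eq_of_isHomogeneous hf rfl
  by_cases hp : p.natDegree ≤ n
  · refine ⟨X 1, p.homogenize n, isHomogeneous_X _ _, Polynomial.isHomogeneous_homogenize _, ?_⟩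
    rw [← hpf, add_comm, ← one_mul p, Polynomial.homogenize_mul 1 p (by simp) hp]
    simp
  · obtain ⟨r, hr⟩ := IsAlgClosed.exists_root p (by
      rw [Polynomial.degree_eq_natDegree (by rintro h; simp [h] at hp)]; norm_cast; omega)
    set q := p /ₘ (Polynomial.X - Polynomial.C r)
    have hpq : (Polynomial.X - Polynomial.C r) * q = p :=
      Polynomial.mul_divByMonic_eq_iff_isRoot.mpr hr
    have hq : q.natDegree ≤ n := by
      have : p.natDegree ≤ n + 1 := hf.natDegree_aeval_X_one_le
      rw [Polynomial.natDegree_divByMonic _ (Polynomial.monic_X_sub_C r),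
        Polynomial.natDegree_X_sub_C]
      omega
    refine ⟨(Polynomial.X - Polynomial.C r).homogenize 1, q.homogenize n,
      Polynomial.isHomogeneous_homogenize _, Polynomial.isHomogeneous_homogenize _, ?_⟩
    rw [← Polynomial.homogenize_mul _ _ (by simp) hq, hpq, add_comm, hpf]

theorem IsHomogeneous.prime_of_ne_zero {σ : Type*} {l : MvPolynomial σ K}
    (hl : l.IsHomogeneous 1) (hl₀ : l ≠ 0) : Prime l := by
  refine UniqueFactorizationMonoid.irreducible_iff_prime.mp
    (irreducible_of_totalDegree_eq_one (hl.totalDegree hl₀) fun c hc => ?_)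
  refine isUnit_iff_ne_zero.mpr fun h => hl₀ (MvPolynomial.ext _ _ fun d => ?_)
  simpa [h] using hc d

theorem IsHomogeneous.exists_eq_C_mul_of_dvd {R σ : Type*} [CommRing R] [IsDomain R]
    {f g : MvPolynomial σ R} {n : ℕ} (hf : f.IsHomogeneous n) (hg : g.IsHomogeneous n)
    (hg₀ : g ≠ 0) (hgf : g ∣ f) : ∃ c, f = C c * g := by
  obtain ⟨m, rfl⟩ := hgf
  obtain rfl | hm₀ := eq_or_ne m 0
  · exact ⟨0, by simp⟩
  have hm : m.totalDegree = 0 := by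
    have := hf.totalDegree (mul_ne_zero hg₀ hm₀)
    rw [totalDegree_mul_of_isDomain hg₀ hm₀, hg.totalDegree hg₀] at this
    omega
  exact ⟨m.coeff 0, by rw [mul_comm, ← totalDegree_eq_zero_iff_eq_C.mp hm]⟩

theorem exists_eq_C_mul_of_map_eq_C_mul {L σ : Type*} [Field L] (φ : K →+* L)
    {a₀ a₁ : MvPolynomial σ K} (ha₀ : a₀ ≠ 0) {γ : L} (h : map φ a₁ = C γ * map φ a₀) :
    ∃ β, a₁ = C β * a₀ := by
  obtain ⟨d, hd⟩ := exists_coeff_ne_zero ha₀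
  have hγ : φ (a₁.coeff d) = γ * φ (a₀.coeff d) := by
    simpa only [coeff_map, coeff_C_mul] using congr_arg (coeff d) h
  have hβ : φ (a₁.coeff d / a₀.coeff d) = γ := by
    rw [map_div₀, hγ, mul_div_cancel_right₀ _ (φ.injective.ne_iff' (map_zero φ) |>.mpr hd)]
  refine ⟨a₁.coeff d / a₀.coeff d, map_injective φ φ.injective ?_⟩
  rw [map_mul, map_C, hβ, h]

theorem IsHomogeneous.exists_eq_C_mul_of_dvd_sq [IsAlgClosed K] {a₀ a₁ : MvPolynomial (Fin 2) K}
    (h₀ : a₀.IsHomogeneous 2) (h₁ : a₁.IsHomogeneous 2) (ha₀ : a₀ ≠ 0) (hdvd : a₀ ∣ a₁ ^ 2)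
    (hnd : ∀ ℓ : MvPolynomial (Fin 2) K, ℓ.IsHomogeneous 1 → ℓ ^ 2 ∣ a₀ → ¬ ℓ ∣ a₁) :
    ∃ γ, a₁ = C γ * a₀ := by
  obtain ⟨l₁, l₂, hl₁, hl₂, rfl⟩ := h₀.exists_linear_factor (n := 1)
  have hp₁ := hl₁.prime_of_ne_zero (left_ne_zero_of_mul ha₀)
  have hp₂ := hl₂.prime_of_ne_zero (right_ne_zero_of_mul ha₀)
  obtain ⟨m, rfl⟩ : l₁ ∣ a₁ := hp₁.dvd_of_dvd_pow ((dvd_mul_right l₁ l₂).trans hdvd)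
  have hl₂m : l₂ ∣ l₁ * m := hp₂.dvd_of_dvd_pow ((dvd_mul_left l₂ l₁).trans hdvd)
  have hl₂l₁ : ¬ l₂ ∣ l₁ := fun ⟨c, hc⟩ => hnd l₂ hl₂ ⟨c, by rw [hc]; ring⟩ hl₂m
  exact h₁.exists_eq_C_mul_of_dvd h₀ ha₀
    (mul_dvd_mul_left l₁ ((hp₂.dvd_or_dvd hl₂m).resolve_left hl₂l₁))

end MvPolynomial

/-- **A binary quadratic form dividing the square of another one.**
(Kollár–Mella, proof of Proposition 13) -/
theorem binary_form_divides (k : Type*) [Field k]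
    (a₀ a₁ : MvPolynomial (Fin 2) k)
    (h₀ : a₀.IsHomogeneous 2) (h₁ : a₁.IsHomogeneous 2) (ha₀ : a₀ ≠ 0)
    (hdvd : a₀ ∣ a₁ ^ 2)
    (hnd : ¬ ∃ ℓ : MvPolynomial (Fin 2) (AlgebraicClosure k),
      ℓ.IsHomogeneous 1 ∧
      ℓ ^ 2 ∣ MvPolynomial.map (algebraMap k (AlgebraicClosure k)) a₀ ∧
      ℓ ∣ MvPolynomial.map (algebraMap k (AlgebraicClosure k)) a₁) :
    ∃ β : k, a₁ = C β * a₀ := by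
  set φ := algebraMap k (AlgebraicClosure k)
  have hφa₀ : map φ a₀ ≠ 0 := (map_injective φ φ.injective).ne_iff' (map_zero _) |>.mpr ha₀
  obtain ⟨γ, hγ⟩ := (h₀.map φ).exists_eq_C_mul_of_dvd_sq (h₁.map φ) hφa₀
    (by simpa only [map_pow] using map_dvd (map φ) hdvd)
    fun ℓ hℓ hℓ₀ hℓ₁ => hnd ⟨ℓ, hℓ, hℓ₀, hℓ₁⟩
  exact exists_eq_C_mul_of_map_eq_C_mul φ ha₀ hγ
end
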